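/- arXiv:2505.05192 — 2 statements merged into one kernel-verified Lean document; each statement's English description precedes it below -/
import Mathlib

section
/- Let W, Y be random variables on a probability space, X, Z measurable maps, and G a group indicator. Suppose (i) consistency: Y = Y(w) on {W = w}; (ii) conditional independence of W and (Y(1), Y(0)) given (X, Z) on the event {G = o}; (iii) conditional independence of G and (Y(1), Y(0)) given X. Then E[Y(1) − Y(0) | X = x] = E[ E[Y | W=1, X=x, Z, G=o] − E[Y | W=0, X=x, Z, G=o] | X = x, G = o ], i.e., the individual treatment effect is identified by adjusting for (X, Z) in the observational data. -/
/-!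
Consistency turns `E[Y | W = w, X = x, Z = z, G = o]` into `E[Y(w) | W = w, X = x, Z = z, G = o]`,
which by (ii) is `E[Y(w) | X = x, Z = z, G = o]`. Averaging over the countable partition of
`{X = x, G = o}` by the value of `Z` gives back `E[Y(w) | X = x, G = o]` (tower property), and
(iii) replaces this by `E[Y(w) | X = x]`. Linearity of `cexp` in the integrand finishes.
-/

open MeasureTheory

/-- Conditional expectation of `f` given the event `A`:  `E[f | A] = (∫_A f dμ) / μ(A)`. -/
noncomputable def cexp {Ω : Type*} [MeasurableSpace Ω] (μ : Measure Ω)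
    (f : Ω → ℝ) (A : Set Ω) : ℝ :=
  (∫ ω in A, f ω ∂μ) / (μ A).toReal

open scoped ENNReal

section Cexp

variable {Ω 𝒵 : Type*} [MeasurableSpace Ω] {μ : Measure Ω} {f g : Ω → ℝ} {A : Set Ω}
  {Z : Ω → 𝒵}

lemma cexp_sub (hf : IntegrableOn f A μ) (hg : IntegrableOn g A μ) :
    cexp μ (fun ω => f ω - g ω) A = cexp μ f A - cexp μ g A := by
  rw [cexp, cexp, cexp, integral_sub hf hg, sub_div]

lemma cexp_congr_of_eqOn {T : Set Ω} (hT : MeasurableSet T) (hAT : A ⊆ T)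
    (hfg : Set.EqOn f g T) : cexp μ f A = cexp μ g A := by
  have hae : f =ᵐ[μ.restrict A] g :=
    ae_restrict_of_ae_restrict_of_subset hAT (ae_restrict_of_forall_mem hT hfg)
  rw [cexp, cexp, integral_congr_ae hae]

lemma measureReal_mul_cexp (hA : μ A ≠ ∞) : μ.real A * cexp μ f A = ∫ ω in A, f ω ∂μ := by
  rcases eq_or_ne (μ A) 0 with h | h
  · simp [cexp, Measure.restrict_eq_zero.mpr h]
  · exact mul_div_cancel₀ _ (ENNReal.toReal_ne_zero.mpr ⟨h, hA⟩)

lemma measureReal_mul_norm_cexp_le (hA : μ A ≠ ∞) :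
    μ.real A * ‖cexp μ f A‖ ≤ ∫ ω in A, ‖f ω‖ ∂μ := by
  rw [← abs_of_nonneg (measureReal_nonneg (μ := μ) (s := A)), Real.norm_eq_abs, ← abs_mul,
    measureReal_mul_cexp hA]
  exact abs_integral_le_integral_abs

lemma cexp_inter_eq_cexp_restrict {T : Set Ω} (hT : MeasurableSet T) :
    cexp μ f (A ∩ T) = cexp (μ.restrict A) f T := by
  rw [cexp, cexp, Measure.restrict_restrict hT, Measure.restrict_apply hT, Set.inter_comm]

lemma eqOn_cexp_fiber (z : 𝒵) :
    Set.EqOn (fun ω => cexp μ f (Z ⁻¹' {Z ω})) (fun _ => cexp μ f (Z ⁻¹' {z})) (Z ⁻¹' {z}) :=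
  fun _ hω => by simp only [Set.mem_singleton_iff.mp hω]

variable [MeasurableSpace 𝒵] [MeasurableSingletonClass 𝒵]

lemma cexp_inter_fiber_eq_restrict (hZ : Measurable Z) :
    (fun ω => cexp μ f (A ∩ Z ⁻¹' {Z ω})) = fun ω => cexp (μ.restrict A) f (Z ⁻¹' {Z ω}) :=
  funext fun _ => cexp_inter_eq_cexp_restrict (hZ (measurableSet_singleton _))

variable [Countable 𝒵] [IsFiniteMeasure μ]

lemma integrable_cexp_fiber (hZ : Measurable Z) (hf : Integrable f μ) :
    Integrable (fun ω => cexp μ f (Z ⁻¹' {Z ω})) μ := by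
  have hs : ∀ z, MeasurableSet (Z ⁻¹' {z}) := fun z => hZ (measurableSet_singleton z)
  have hcover : ⋃ z, Z ⁻¹' {z} = Set.univ := Set.iUnion_eq_univ_iff.2 fun ω => ⟨Z ω, rfl⟩
  have hsum : Summable fun z => ∫ ω in Z ⁻¹' {z}, ‖f ω‖ ∂μ :=
    (hasSum_integral_iUnion hs (pairwise_disjoint_fiber Z)
      (by rw [hcover]; exact hf.norm.integrableOn)).summable
  rw [← integrableOn_univ, ← hcover]
  refine integrableOn_iUnion_of_summable_integral_norm
    (fun z => (integrableOn_const (measure_ne_top _ _)).congr_fun (eqOn_cexp_fiber z).symm (hs z))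
    (hsum.of_nonneg_of_le (fun z => integral_nonneg fun _ => norm_nonneg _) fun z => ?_)
  rw [setIntegral_congr_fun (hs z) fun ω hω => congrArg norm (eqOn_cexp_fiber z hω),
    setIntegral_const, smul_eq_mul]
  exact measureReal_mul_norm_cexp_le (measure_ne_top _ _)

lemma integral_cexp_fiber (hZ : Measurable Z) (hf : Integrable f μ) :
    ∫ ω, cexp μ f (Z ⁻¹' {Z ω}) ∂μ = ∫ ω, f ω ∂μ := by
  have hs : ∀ z, MeasurableSet (Z ⁻¹' {z}) := fun z => hZ (measurableSet_singleton z)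
  have hcover : ⋃ z, Z ⁻¹' {z} = Set.univ := Set.iUnion_eq_univ_iff.2 fun ω => ⟨Z ω, rfl⟩
  rw [← setIntegral_univ, ← setIntegral_univ (f := f), ← hcover,
    integral_iUnion hs (pairwise_disjoint_fiber Z)
      (by rw [hcover]; exact (integrable_cexp_fiber hZ hf).integrableOn),
    integral_iUnion hs (pairwise_disjoint_fiber Z) (by rw [hcover]; exact hf.integrableOn)]
  refine tsum_congr fun z => ?_
  rw [setIntegral_congr_fun (hs z) (eqOn_cexp_fiber z), setIntegral_const, smul_eq_mul,
    measureReal_mul_cexp (measure_ne_top _ _)]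

lemma integrableOn_cexp_inter_fiber (hZ : Measurable Z) (hf : Integrable f μ) :
    IntegrableOn (fun ω => cexp μ f (A ∩ Z ⁻¹' {Z ω})) A μ := by
  rw [IntegrableOn, cexp_inter_fiber_eq_restrict hZ]
  exact integrable_cexp_fiber hZ hf.restrict

lemma cexp_cexp_inter_fiber (hZ : Measurable Z) (hf : Integrable f μ) :
    cexp μ (fun ω => cexp μ f (A ∩ Z ⁻¹' {Z ω})) A = cexp μ f A := by
  rw [cexp, cexp, cexp_inter_fiber_eq_restrict hZ, integral_cexp_fiber hZ hf.restrict]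

end Cexp

theorem longterm_ite_identification_latent_adjustment_general
    {Ω 𝒳 𝒵 : Type*} [MeasurableSpace Ω] [MeasurableSpace 𝒳] [MeasurableSpace 𝒵]
    [Countable 𝒵] [MeasurableSingletonClass 𝒵]
    (μ : Measure Ω) [IsProbabilityMeasure μ]
    (W Y Y0 Y1 : Ω → ℝ) (X : Ω → 𝒳) (Z : Ω → 𝒵) (G : Ω → Bool) (x : 𝒳)
    (hWm : Measurable W)
    (hZm : Measurable Z)
    (hY0i : Integrable Y0 μ) (hY1i : Integrable Y1 μ)
    -- (i) consistency: Y = Y(w) on {W = w}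
    (hcons : ∀ ω, Y ω = W ω * Y1 ω + (1 - W ω) * Y0 ω)
    -- (ii) conditional (mean) independence of W and (Y(1), Y(0)) given (X, Z) on {G = o}
    (hCI1 : ∀ z : 𝒵,
      cexp μ Y1 {ω | W ω = 1 ∧ X ω = x ∧ Z ω = z ∧ G ω = true}
        = cexp μ Y1 {ω | X ω = x ∧ Z ω = z ∧ G ω = true})
    (hCI0 : ∀ z : 𝒵,
      cexp μ Y0 {ω | W ω = 0 ∧ X ω = x ∧ Z ω = z ∧ G ω = true}
        = cexp μ Y0 {ω | X ω = x ∧ Z ω = z ∧ G ω = true})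
    -- (iii) conditional independence of G and (Y(1), Y(0)) given X (mean form)
    (hEV1 : cexp μ Y1 {ω | X ω = x ∧ G ω = true} = cexp μ Y1 {ω | X ω = x})
    (hEV0 : cexp μ Y0 {ω | X ω = x ∧ G ω = true} = cexp μ Y0 {ω | X ω = x}) :
    cexp μ (fun ω => Y1 ω - Y0 ω) {ω | X ω = x}
      = cexp μ (fun ω =>
          cexp μ Y {ω' | W ω' = 1 ∧ X ω' = x ∧ Z ω' = Z ω ∧ G ω' = true}
            - cexp μ Y {ω' | W ω' = 0 ∧ X ω' = x ∧ Z ω' = Z ω ∧ G ω' = true})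
        {ω | X ω = x ∧ G ω = true} := by
  set B := {ω | X ω = x ∧ G ω = true}
  have hfiber (z : 𝒵) : {ω | X ω = x ∧ Z ω = z ∧ G ω = true} = B ∩ Z ⁻¹' {z} := by
    ext ω; simp only [B, Set.mem_ofPred_eq, Set.mem_inter_iff, Set.mem_preimage,
      Set.mem_singleton_iff]; tauto
  have hadj1 (z : 𝒵) : cexp μ Y {ω | W ω = 1 ∧ X ω = x ∧ Z ω = z ∧ G ω = true}
      = cexp μ Y1 (B ∩ Z ⁻¹' {z}) := by
    rw [cexp_congr_of_eqOn (g := Y1) (hWm (measurableSet_singleton 1)) (fun _ hω => hω.1)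
      (fun ω (hω : W ω = 1) => by simp [hcons ω, hω]), hCI1, hfiber]
  have hadj0 (z : 𝒵) : cexp μ Y {ω | W ω = 0 ∧ X ω = x ∧ Z ω = z ∧ G ω = true}
      = cexp μ Y0 (B ∩ Z ⁻¹' {z}) := by
    rw [cexp_congr_of_eqOn (g := Y0) (hWm (measurableSet_singleton 0)) (fun _ hω => hω.1)
      (fun ω (hω : W ω = 0) => by simp [hcons ω, hω]), hCI0, hfiber]
  simp_rw [hadj1, hadj0]
  rw [cexp_sub hY1i.integrableOn hY0i.integrableOn, ← hEV1, ← hEV0,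
    cexp_sub (integrableOn_cexp_inter_fiber hZm hY1i) (integrableOn_cexp_inter_fiber hZm hY0i),
    cexp_cexp_inter_fiber hZm hY1i, cexp_cexp_inter_fiber hZm hY0i]

/-- Under (i) consistency, (ii) conditional (mean) independence of `W` and the
potential outcomes `(Y(1), Y(0))` given `(X, Z)` on the observational group `{G = o}`
(`G = true` encodes `o`), and (iii) conditional independence of `G` and the potential
outcomes given `X`, the individual treatment effect is identified by adjusting for
`(X, Z)` in the observational data:
`E[Y(1) − Y(0) | X = x]
  = E[ E[Y | W=1, X=x, Z, G=o] − E[Y | W=0, X=x, Z, G=o] | X = x, G = o ]`. -/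
theorem longterm_ite_identification_latent_adjustment
    {Ω 𝒳 𝒵 : Type*} [MeasurableSpace Ω] [MeasurableSpace 𝒳] [MeasurableSpace 𝒵]
    [Countable 𝒵] [MeasurableSingletonClass 𝒵]
    (μ : Measure Ω) [IsProbabilityMeasure μ]
    (W Y Y0 Y1 : Ω → ℝ) (X : Ω → 𝒳) (Z : Ω → 𝒵) (G : Ω → Bool) (x : 𝒳)
    (hWm : Measurable W) (hY0m : Measurable Y0) (hY1m : Measurable Y1)
    (hXm : Measurable X) (hZm : Measurable Z) (hGm : Measurable G)
    (hY0i : Integrable Y0 μ) (hY1i : Integrable Y1 μ)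
    -- binary treatment
    (hWbin : ∀ ω, W ω = 0 ∨ W ω = 1)
    -- (i) consistency: Y = Y(w) on {W = w}
    (hcons : ∀ ω, Y ω = W ω * Y1 ω + (1 - W ω) * Y0 ω)
    -- positivity
    (hposX : 0 < μ {ω | X ω = x})
    (hposXG : 0 < μ {ω | X ω = x ∧ G ω = true})
    (hposWXZG : ∀ z : 𝒵, 0 < μ {ω | X ω = x ∧ Z ω = z ∧ G ω = true} →
      (0 < μ {ω | W ω = 1 ∧ X ω = x ∧ Z ω = z ∧ G ω = true} ∧
       0 < μ {ω | W ω = 0 ∧ X ω = x ∧ Z ω = z ∧ G ω = true}))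
    -- (ii) conditional (mean) independence of W and (Y(1), Y(0)) given (X, Z) on {G = o}
    (hCI1 : ∀ z : 𝒵,
      cexp μ Y1 {ω | W ω = 1 ∧ X ω = x ∧ Z ω = z ∧ G ω = true}
        = cexp μ Y1 {ω | X ω = x ∧ Z ω = z ∧ G ω = true})
    (hCI0 : ∀ z : 𝒵,
      cexp μ Y0 {ω | W ω = 0 ∧ X ω = x ∧ Z ω = z ∧ G ω = true}
        = cexp μ Y0 {ω | X ω = x ∧ Z ω = z ∧ G ω = true})
    -- (iii) conditional independence of G and (Y(1), Y(0)) given X (mean form)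
    (hEV1 : cexp μ Y1 {ω | X ω = x ∧ G ω = true} = cexp μ Y1 {ω | X ω = x})
    (hEV0 : cexp μ Y0 {ω | X ω = x ∧ G ω = true} = cexp μ Y0 {ω | X ω = x}) :
    cexp μ (fun ω => Y1 ω - Y0 ω) {ω | X ω = x}
      = cexp μ (fun ω =>
          cexp μ Y {ω' | W ω' = 1 ∧ X ω' = x ∧ Z ω' = Z ω ∧ G ω' = true}
            - cexp μ Y {ω' | W ω' = 0 ∧ X ω' = x ∧ Z ω' = Z ω ∧ G ω' = true})
        {ω | X ω = x ∧ G ω = true} :=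
  longterm_ite_identification_latent_adjustment_general μ W Y Y0 Y1 X Z G x hWm hZm hY0i hY1i hcons
    hCI1 hCI0 hEV1 hEV0
end

section
/- Under consistency (S = S(w) on {W = w}), internal validity of experimental data (W ⟂ S(w) | X on {G = e}), and external validity (G ⟂ S(w) | X), the distribution of the potential short-term outcome in the observational group equals the conditional distribution of the observed short-term outcome in the experiment: P(S(w) ∈ A | X = x, G = o) = P(S ∈ A | W = w, X = x, G = e) for all measurable A. -/
open MeasureTheory

/-- Conditional probability of event `A` given event `B`. -/
noncomputable def cprob {Ω : Type*} [MeasurableSpace Ω] (μ : Measure Ω)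
    (A B : Set Ω) : ENNReal :=
  μ (A ∩ B) / μ B

/-- Under consistency (`S = S(w)` on `{W = w}`), internal validity of the
experimental data (`W ⟂ S(w) | X` on `{G = e}`; here `G = false` encodes `e` and
`G = true` encodes `o`), and external validity (`G ⟂ S(w) | X`), the distribution of the
potential short-term outcome in the observational group equals the conditional
distribution of the observed short-term outcome in the experiment:
`P(S(w) ∈ A | X = x, G = o) = P(S ∈ A | W = w, X = x, G = e)` for all measurable `A`. -/
theorem potential_shortterm_distribution_identification
    {Ω 𝒳 𝒮 : Type*} [MeasurableSpace Ω] [MeasurableSpace 𝒳] [MeasurableSpace 𝒮]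
    (μ : Measure Ω) [IsProbabilityMeasure μ]
    (W : Ω → ℝ) (S S0 S1 : Ω → 𝒮) (X : Ω → 𝒳) (G : Ω → Bool) (x : 𝒳)
    (w : ℝ) (hw : w = 0 ∨ w = 1)
    (Sw : Ω → 𝒮) (hSw : Sw = if w = 1 then S1 else S0)
    -- binary treatment
    (hWbin : ∀ ω, W ω = 0 ∨ W ω = 1)
    -- consistency: S = S(w) on {W = w}
    (hcons : ∀ ω, (W ω = 1 → S ω = S1 ω) ∧ (W ω = 0 → S ω = S0 ω))
    -- positivity
    (hpos_e : 0 < μ {ω | W ω = w ∧ X ω = x ∧ G ω = false})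
    (hpos_o : 0 < μ {ω | X ω = x ∧ G ω = true})
    (hpos_xe : 0 < μ {ω | X ω = x ∧ G ω = false})
    (hpos_x : 0 < μ {ω | X ω = x})
    -- internal validity of experimental data: W ⟂ S(w) | X on {G = e}
    (hInternal : ∀ (A : Set 𝒮), MeasurableSet A → ∀ w' : ℝ, (w' = 0 ∨ w' = 1) →
      cprob μ {ω | Sw ω ∈ A} {ω | W ω = w' ∧ X ω = x ∧ G ω = false}
        = cprob μ {ω | Sw ω ∈ A} {ω | X ω = x ∧ G ω = false})
    -- external validity: G ⟂ S(w) | X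
    (hExternal : ∀ (A : Set 𝒮), MeasurableSet A → ∀ g : Bool,
      cprob μ {ω | Sw ω ∈ A} {ω | X ω = x ∧ G ω = g}
        = cprob μ {ω | Sw ω ∈ A} {ω | X ω = x}) :
    ∀ (A : Set 𝒮), MeasurableSet A →
      cprob μ {ω | Sw ω ∈ A} {ω | X ω = x ∧ G ω = true}
        = cprob μ {ω | S ω ∈ A} {ω | W ω = w ∧ X ω = x ∧ G ω = false} := by
  intro A hA
  have key : {ω | S ω ∈ A} ∩ {ω | W ω = w ∧ X ω = x ∧ G ω = false}
      = {ω | Sw ω ∈ A} ∩ {ω | W ω = w ∧ X ω = x ∧ G ω = false} := by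
    ext ω
    simp only [Set.mem_inter_iff, Set.mem_setOf_eq, and_congr_left_iff]
    rintro ⟨hWw, -, -⟩
    have hs : S ω = Sw ω := by
      rcases hw with h | h <;> subst h <;> simp [hSw]
      · exact (hcons ω).2 hWw
      · exact (hcons ω).1 hWw
    rw [hs]
  rw [hExternal A hA true, ← hExternal A hA false, ← hInternal A hA w hw,
    cprob, cprob, key]
end
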